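/- arXiv:1012.1174 — 2 statements merged into one kernel-verified Lean document; each statement's English description precedes it below -/
import Mathlib

section
/- In intuitionistic linear logic, if both sequents ⊢ A[T/z] and ⊢ A[F/z] are derivable (where T and F are the boolean constants), then the sequent ⊢ A[z] is derivable for a boolean variable z, given the boolean axioms: !(T = F) ⊸ 0, and !(z = T) ⊕ !(z = F), and the substitution axiom !(x = y) ⊗ A[x/w] ⊸ A[y/w]. -/
inductive BTerm : Type where
  | T : BTerm
  | F : BTerm
  | var : ℕ → BTerm

inductive Fml : Type where
  | atom : ℕ → Fml
  | eq : BTerm → BTerm → Fml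
  | zero : Fml
  | tensor : Fml → Fml → Fml
  | limp : Fml → Fml → Fml
  | wth : Fml → Fml → Fml
  | oplus : Fml → Fml → Fml
  | bang : Fml → Fml

def BTerm.subst (t : BTerm) (n : ℕ) (s : BTerm) : BTerm :=
  match t with
  | .var m => if m = n then s else .var m
  | t => t

/-- Substitution of the boolean term `s` for the boolean variable `n` in a formula. -/
def Fml.subst : Fml → ℕ → BTerm → Fml
  | .atom k, _, _ => .atom k
  | .eq a b, n, s => .eq (a.subst n s) (b.subst n s)
  | .zero, _, _ => .zero
  | .tensor A B, n, s => .tensor (A.subst n s) (B.subst n s)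
  | .limp A B, n, s => .limp (A.subst n s) (B.subst n s)
  | .wth A B, n, s => .wth (A.subst n s) (B.subst n s)
  | .oplus A B, n, s => .oplus (A.subst n s) (B.subst n s)
  | .bang A, n, s => .bang (A.subst n s)

/-- The verifying system ILLᵇ: intuitionistic linear logic with the boolean axioms. -/
inductive Deriv : List Fml → Fml → Prop where
  | id : ∀ (A : Fml), Deriv [A] A
  | exch : ∀ {Γ Δ : List (Fml)} {A : Fml}, List.Perm Γ Δ → Deriv Γ A → Deriv Δ A
  | cut : ∀ {Γ Δ : List (Fml)} {A B : Fml}, Deriv Γ A → Deriv (A :: Δ) B → Deriv (Γ ++ Δ) B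
  | zeroL : ∀ (Γ : List (Fml)) (A : Fml), Deriv (Fml.zero :: Γ) A
  | tensorR : ∀ {Γ Δ : List (Fml)} {A B : Fml}, Deriv Γ A → Deriv Δ B → Deriv (Γ ++ Δ) (Fml.tensor A B)
  | tensorL : ∀ {Γ : List (Fml)} {A B C : Fml}, Deriv (A :: B :: Γ) C → Deriv (Fml.tensor A B :: Γ) C
  | limpR : ∀ {Γ : List (Fml)} {A B : Fml}, Deriv (A :: Γ) B → Deriv Γ (Fml.limp A B)
  | limpL : ∀ {Γ Δ : List (Fml)} {A B C : Fml}, Deriv Γ A → Deriv (B :: Δ) C → Deriv (Fml.limp A B :: (Γ ++ Δ)) C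
  | withR : ∀ {Γ : List (Fml)} {A B : Fml}, Deriv Γ A → Deriv Γ B → Deriv Γ (Fml.wth A B)
  | withL₁ : ∀ {Γ : List (Fml)} {A B C : Fml}, Deriv (A :: Γ) C → Deriv (Fml.wth A B :: Γ) C
  | withL₂ : ∀ {Γ : List (Fml)} {A B C : Fml}, Deriv (B :: Γ) C → Deriv (Fml.wth A B :: Γ) C
  | oplusR₁ : ∀ {Γ : List (Fml)} {A B : Fml}, Deriv Γ A → Deriv Γ (Fml.oplus A B)
  | oplusR₂ : ∀ {Γ : List (Fml)} {A B : Fml}, Deriv Γ B → Deriv Γ (Fml.oplus A B)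
  | oplusL : ∀ {Γ : List (Fml)} {A B C : Fml}, Deriv (A :: Γ) C → Deriv (B :: Γ) C → Deriv (Fml.oplus A B :: Γ) C
  | contr : ∀ {Γ : List (Fml)} {A B : Fml}, Deriv (Fml.bang A :: Fml.bang A :: Γ) B → Deriv (Fml.bang A :: Γ) B
  | weak : ∀ {Γ : List (Fml)} {A B : Fml}, Deriv Γ B → Deriv (Fml.bang A :: Γ) B
  | bangR : ∀ {Γ : List (Fml)} {A : Fml}, Deriv (Γ.map Fml.bang) A → Deriv (Γ.map Fml.bang) (Fml.bang A)
  | bangL : ∀ {Γ : List (Fml)} {A B : Fml}, Deriv (A :: Γ) B → Deriv (Fml.bang A :: Γ) B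
  | axRefl : ∀ (t : BTerm), Deriv [] (Fml.bang (Fml.eq t t))
  | axSymm : ∀ (s t : BTerm), Deriv [] (Fml.limp (Fml.bang (Fml.eq s t)) (Fml.bang (Fml.eq t s)))
  | axTrans : ∀ (s t r : BTerm), Deriv [] (Fml.limp (Fml.tensor (Fml.bang (Fml.eq s t)) (Fml.bang (Fml.eq t r))) (Fml.bang (Fml.eq s r)))
  | axSubst : ∀ (s t : BTerm) (A : Fml) (n : ℕ), Deriv [] (Fml.limp (Fml.tensor (Fml.bang (Fml.eq s t)) (A.subst n s)) (A.subst n t))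
  | axTF : Deriv [] (Fml.limp (Fml.bang (Fml.eq BTerm.T BTerm.F)) Fml.zero)
  | axCases : ∀ (t : BTerm), Deriv [] (Fml.oplus (Fml.bang (Fml.eq t BTerm.T)) (Fml.bang (Fml.eq t BTerm.F)))

/-- Linear bi-implication: (A ⊸ B) & (B ⊸ A). -/
def biimp (A B : Fml) : Fml := Fml.wth (Fml.limp A B) (Fml.limp B A)

/-- The boolean conditional  z(A, B) := (!(z =ᵇ T) ⊸ A) & (!(z =ᵇ F) ⊸ B). -/
def bcond (z : BTerm) (A B : Fml) : Fml :=
  Fml.wth (Fml.limp (Fml.bang (Fml.eq z BTerm.T)) A) (Fml.limp (Fml.bang (Fml.eq z BTerm.F)) B)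

lemma BTerm.subst_var_self (t : BTerm) (z : ℕ) : t.subst z (.var z) = t := by
  cases t <;> simp [BTerm.subst]
  omega

lemma Fml.subst_var_self (A : Fml) (z : ℕ) : A.subst z (.var z) = A := by
  induction A <;> simp [Fml.subst, BTerm.subst_var_self, *]

lemma useCase (A : Fml) (z : ℕ) (s : BTerm) (h : Deriv [] (A.subst z s)) :
    Deriv [Fml.bang (Fml.eq (BTerm.var z) s)] A := by
  -- from !(z = s) derive !(s = z)
  have h1 : Deriv [Fml.bang (Fml.eq (BTerm.var z) s)] (Fml.bang (Fml.eq s (BTerm.var z))) := by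
    have := Deriv.cut (Deriv.axSymm (BTerm.var z) s)
      (Deriv.limpL (Δ := []) (Deriv.id _) (Deriv.id _))
    simpa using this
  -- tensor with h
  have h2 : Deriv [Fml.bang (Fml.eq (BTerm.var z) s)]
      (Fml.tensor (Fml.bang (Fml.eq s (BTerm.var z))) (A.subst z s)) := by
    have := Deriv.tensorR h1 h
    simpa using this
  -- apply substitution axiom
  have h3 := Deriv.axSubst s (BTerm.var z) A z
  rw [Fml.subst_var_self] at h3
  have := Deriv.cut h3 (Deriv.limpL (Δ := []) h2 (Deriv.id A))
  simpa using this

/-- if ⊢ A[T/z] and ⊢ A[F/z] are derivable in ILLᵇ, then so is ⊢ A[z]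
(where A is a formula whose boolean variable z is free, i.e. A itself). -/
theorem stmt0 (A : Fml) (z : ℕ)
    (hT : Deriv [] (A.subst z BTerm.T))
    (hF : Deriv [] (A.subst z BTerm.F)) :
    Deriv [] A := by
  have := Deriv.cut (Deriv.axCases (BTerm.var z))
    (Deriv.oplusL (Γ := []) (useCase A z BTerm.T hT) (useCase A z BTerm.F hF))
  simpa using this
end

section
/- Define z(A, B) := (!(z =ᵇ T) ⊸ A) & (!(z =ᵇ F) ⊸ B). In ILLᵇ, the linear equivalence z(!A, !B) ⊸⊸ !(z(!A, !B)) is derivable for any formulas A, B and boolean variable z. -/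
/-- Modus ponens from a derivable implication. -/
lemma Deriv.mp {Γ : List Fml} {A B : Fml}
    (h1 : Deriv [] (Fml.limp A B)) (h2 : Deriv Γ A) : Deriv Γ B := by
  have h3 := Deriv.limpL h2 (Deriv.id B)
  have h4 := Deriv.cut h1 h3
  simpa using h4

private lemma perm_rot {α : Type*} (a b c : α) : List.Perm [a, b, c] [b, c, a] :=
  (List.Perm.swap b a [c]).trans ((List.Perm.swap c a []).cons b)

/-- From contradictory boolean hypotheses we can derive 0. -/
lemma zeroTF (z : ℕ) :
    Deriv [Fml.bang (Fml.eq (BTerm.var z) BTerm.T),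
           Fml.bang (Fml.eq (BTerm.var z) BTerm.F)] Fml.zero := by
  have s1 : Deriv [Fml.bang (Fml.eq (BTerm.var z) BTerm.T)]
      (Fml.bang (Fml.eq BTerm.T (BTerm.var z))) :=
    Deriv.mp (Deriv.axSymm (BTerm.var z) BTerm.T) (Deriv.id _)
  have t1 := Deriv.tensorR s1 (Deriv.id (Fml.bang (Fml.eq (BTerm.var z) BTerm.F)))
  have t2 := Deriv.mp (Deriv.axTrans BTerm.T (BTerm.var z) BTerm.F) t1
  exact Deriv.mp Deriv.axTF t2

/-- z(!A, !B) ⊸⊸ !(z(!A, !B)) is derivable in ILLᵇ for a boolean variable z. -/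
theorem stmt4 (A B : Fml) (z : ℕ) :
    Deriv [] (biimp (bcond (BTerm.var z) (Fml.bang A) (Fml.bang B))
                    (Fml.bang (bcond (BTerm.var z) (Fml.bang A) (Fml.bang B)))) := by
  set ET := Fml.bang (Fml.eq (BTerm.var z) BTerm.T) with hET
  set EF := Fml.bang (Fml.eq (BTerm.var z) BTerm.F) with hEF
  set C := bcond (BTerm.var z) (Fml.bang A) (Fml.bang B) with hC
  have zTF : Deriv [ET, EF] Fml.zero := zeroTF z
  have zFT : Deriv [EF, ET] Fml.zero := Deriv.exch (List.Perm.swap EF ET []) zTF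
  -- Case z = T : from [ET, C] derive !C
  have coreT : Deriv [Fml.bang A, ET] (Fml.bang C) := by
    have hctx : [Fml.bang A, ET] = List.map Fml.bang [A, Fml.eq (BTerm.var z) BTerm.T] := rfl
    rw [hctx]
    apply Deriv.bangR
    rw [← hctx, hC]
    apply Deriv.withR
    · apply Deriv.limpR
      exact Deriv.exch ((List.Perm.swap (Fml.bang A) ET []).cons ET)
        (Deriv.weak (Deriv.weak (Deriv.id (Fml.bang A))))
    · apply Deriv.limpR
      have h := Deriv.cut zTF (Deriv.zeroL [Fml.bang A] (Fml.bang B))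
      exact Deriv.exch (perm_rot ET EF (Fml.bang A)) h
  have stepT : Deriv [ET, C] (Fml.bang C) := by
    have h1 := Deriv.limpL (Deriv.id ET) coreT
    have h2 := Deriv.withL₁ (B := Fml.limp EF (Fml.bang B)) h1
    exact Deriv.contr (Deriv.exch (perm_rot C ET ET) h2)
  -- Case z = F : from [EF, C] derive !C
  have coreF : Deriv [Fml.bang B, EF] (Fml.bang C) := by
    have hctx : [Fml.bang B, EF] = List.map Fml.bang [B, Fml.eq (BTerm.var z) BTerm.F] := rfl
    rw [hctx]
    apply Deriv.bangR
    rw [← hctx, hC]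
    apply Deriv.withR
    · apply Deriv.limpR
      have h := Deriv.cut zFT (Deriv.zeroL [Fml.bang B] (Fml.bang A))
      exact Deriv.exch (perm_rot EF ET (Fml.bang B)) h
    · apply Deriv.limpR
      exact Deriv.exch ((List.Perm.swap (Fml.bang B) EF []).cons EF)
        (Deriv.weak (Deriv.weak (Deriv.id (Fml.bang B))))
  have stepF : Deriv [EF, C] (Fml.bang C) := by
    have h1 := Deriv.limpL (Deriv.id EF) coreF
    have h2 := Deriv.withL₂ (A := Fml.limp ET (Fml.bang A)) h1
    exact Deriv.contr (Deriv.exch (perm_rot C EF EF) h2)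
  -- put it together
  have main : Deriv [C] (Fml.bang C) := by
    have h := Deriv.cut (Deriv.axCases (BTerm.var z)) (Deriv.oplusL stepT stepF)
    simpa using h
  exact Deriv.withR (Deriv.limpR main) (Deriv.limpR (Deriv.bangL (Deriv.id C)))
end
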